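/- Let Λ := {v_II + t·v_I : t ∈ ℝ} be the straight line in ℝ⁵ through v_II with direction v_I. Then Λ ∩ 𝓛 = {v_II + t·v_I : 0 ≤ t < 1/(3+2√3)}; in particular, near the point v_II the intersection of Λ with 𝓛 is a half-open segment emanating from v_II (a single half-branch). -/

import Mathlib

noncomputable def vI : EuclideanSpace ℝ (Fin 5) :=
  !₂[2, -(3 + 2 * Real.sqrt 3), -(3 + 2 * Real.sqrt 3), 5, 5]

noncomputable def vII : EuclideanSpace ℝ (Fin 5) :=
  !₂[2 * (Real.sqrt 3 - 1), 1, 1, 1, 1]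

noncomputable def vIII : EuclideanSpace ℝ (Fin 5) :=
  !₂[2, 5, 5, -(3 + 2 * Real.sqrt 3), -(3 + 2 * Real.sqrt 3)]

def LsetI : Set (EuclideanSpace ℝ (Fin 5)) :=
  {p | ∃ α β : ℝ, β > (3 + 2 * Real.sqrt 3) * α ∧ (3 + 2 * Real.sqrt 3) * α > 0 ∧
    p = α • vI + β • vII}

def LsetII : Set (EuclideanSpace ℝ (Fin 5)) :=
  {p | ∃ γ : ℝ, γ > 0 ∧ p = γ • vII}

def LsetIII : Set (EuclideanSpace ℝ (Fin 5)) :=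
  {p | ∃ δ ε : ℝ, ε > (3 + 2 * Real.sqrt 3) * δ ∧ (3 + 2 * Real.sqrt 3) * δ > 0 ∧
    p = δ • vIII + ε • vII}

def Lset : Set (EuclideanSpace ℝ (Fin 5)) := LsetI ∪ LsetII ∪ LsetIII

def Lambda : Set (EuclideanSpace ℝ (Fin 5)) :=
  {p | ∃ t : ℝ, p = vII + t • vI}

/-!
Since `vI`, `vII`, `vIII` are linearly independent, a point `vII + t • vI` of the line has
unique coordinates `(t, 1, 0)` in this basis. Membership in `𝓛_I` then forces `(α, β) = (t, 1)`,
i.e. `0 < t < 1 / (3 + 2√3)`; membership in `𝓛_II` forces `t = 0`; and `𝓛_III` is missed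
entirely, because its points have a nonzero `vIII`-coordinate.
-/

theorem linearIndependent_vI_vII_vIII : LinearIndependent ℝ ![vI, vII, vIII] := by
  rw [Fintype.linearIndependent_iff]
  intro g hg
  have coord (i : Fin 5) := congrArg (· i) hg
  have h0 := coord 0
  have h1 := coord 1
  have h3 := coord 3
  simp only [Fin.sum_univ_three, vI, vII, vIII, Matrix.cons_val_zero, Matrix.cons_val_one,
    Matrix.cons_val, PiLp.add_apply, PiLp.smul_apply, smul_eq_mul, PiLp.zero_apply,
    mul_one] at h0 h1 h3
  have h20 : g 2 = g 0 := by
    have : (8 + 2 * √3) * (g 2 - g 0) = 0 := by linear_combination h1 - h3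
    linarith [(mul_eq_zero.mp this).resolve_left (by positivity)]
  have h1' : g 1 = 2 * (√3 - 1) * g 0 := by linear_combination h1 - 5 * h20
  have hg0 : g 0 = 0 := by
    have : ((√3 - 1) ^ 2 + 1) * g 0 = 0 := by
      linear_combination h0 / 4 - (√3 - 1) / 2 * h1' - h20 / 2
    exact (mul_eq_zero.mp this).resolve_left (by positivity)
  intro i
  fin_cases i <;> simp [hg0, h1', h20]

theorem smul_vI_add_smul_vII_add_smul_vIII_eq_zero {a b c : ℝ}
    (h : a • vI + b • vII + c • vIII = 0) : a = 0 ∧ b = 0 ∧ c = 0 := by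
  have := Fintype.linearIndependent_iff.mp linearIndependent_vI_vII_vIII ![a, b, c]
    (by simpa [Fin.sum_univ_three, add_assoc] using h)
  exact ⟨this 0, this 1, this 2⟩

theorem line_mem_LsetI_iff (t : ℝ) :
    vII + t • vI ∈ LsetI ↔ 0 < t ∧ t < 1 / (3 + 2 * √3) := by
  have hs : 0 < 3 + 2 * √3 := by positivity
  constructor
  · rintro ⟨α, β, hβ, hα, hp⟩
    obtain ⟨hαt, hβ1, -⟩ := smul_vI_add_smul_vII_add_smul_vIII_eq_zero
      (a := t - α) (b := 1 - β) (c := 0) (by linear_combination (norm := module) hp)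
    obtain rfl : α = t := by linarith
    obtain rfl : β = 1 := by linarith
    exact ⟨pos_of_mul_pos_right hα hs.le, by rwa [lt_div_iff₀ hs, mul_comm]⟩
  · rintro ⟨ht0, ht1⟩
    refine ⟨t, 1, ?_, by positivity, by module⟩
    rwa [lt_div_iff₀ hs, mul_comm] at ht1

theorem line_mem_LsetII_iff (t : ℝ) : vII + t • vI ∈ LsetII ↔ t = 0 := by
  constructor
  · rintro ⟨γ, -, hp⟩
    exact (smul_vI_add_smul_vII_add_smul_vIII_eq_zero
      (b := 1 - γ) (c := 0) (by linear_combination (norm := module) hp)).1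
  · rintro rfl
    exact ⟨1, one_pos, by module⟩

theorem line_not_mem_LsetIII (t : ℝ) : vII + t • vI ∉ LsetIII := by
  rintro ⟨δ, ε, -, hδ, hp⟩
  obtain ⟨-, -, hδ0⟩ := smul_vI_add_smul_vII_add_smul_vIII_eq_zero
    (a := t) (b := 1 - ε) (c := -δ) (by linear_combination (norm := module) hp)
  simp [neg_eq_zero.mp hδ0] at hδ

theorem line_mem_Lset_iff (t : ℝ) :
    vII + t • vI ∈ Lset ↔ 0 ≤ t ∧ t < 1 / (3 + 2 * √3) := by
  simp only [Lset, Set.mem_union, line_mem_LsetI_iff, line_mem_LsetII_iff,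
    line_not_mem_LsetIII, or_false]
  constructor
  · rintro (⟨ht0, ht1⟩ | rfl)
    · exact ⟨ht0.le, ht1⟩
    · exact ⟨le_rfl, by positivity⟩
  · rintro ⟨ht0, ht1⟩
    exact ht0.lt_or_eq.imp (⟨·, ht1⟩) Eq.symm

theorem Lambda_inter_Lset :
    Lambda ∩ Lset =
      {p | ∃ t : ℝ, 0 ≤ t ∧ t < 1 / (3 + 2 * Real.sqrt 3) ∧ p = vII + t • vI} := by
  ext p
  constructor
  · rintro ⟨⟨t, rfl⟩, hp⟩
    obtain ⟨ht0, ht1⟩ := (line_mem_Lset_iff t).1 hp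
    exact ⟨t, ht0, ht1, rfl⟩
  · rintro ⟨t, ht0, ht1, rfl⟩
    exact ⟨⟨t, rfl⟩, (line_mem_Lset_iff t).2 ⟨ht0, ht1⟩⟩
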